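/- Let d > 1 and let a ≥ b > 0 be integers, written as a = C(s - 1 + d, d) + A with s > 0 and 0 ≤ A < C(s - 1 + d, d - 1), and b = C(t - 1 + d, d) + B with t ≥ 0 and 0 < B ≤ C(t - 1 + d, d - 1). Suppose A + B = C(s - 1 + d, d - 1) + e for some e ≥ 0, and suppose A^{⟨d-1⟩} + B^{⟨d-1⟩} ≤ (C(s - 1 + d, d - 1))^{⟨d-1⟩} + e^{⟨d-1⟩}. Then setting a_1 = C(s + d, d) and b_1 = C(t - 1 + d, d) + e, one has 0 ≤ b_1 < b ≤ a < a_1, a + b = a_1 + b_1, and a^{⟨d⟩} + b^{⟨d⟩} ≤ a_1^{⟨d⟩} + b_1^{⟨d⟩}. -/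

import Mathlib

/-- Macaulay's function `a^{⟨d⟩}`: writing `a` in its Macaulay `d`-binomial representation
`a = C(k_d, d) + C(k_{d-1}, d-1) + ⋯ + C(k_j, j)` (computed greedily: `k_d` is the largest
integer with `C(k_d, d) ≤ a`), we set `a^{⟨d⟩} = C(k_d+1, d+1) + ⋯ + C(k_j+1, j+1)`,
and `0^{⟨d⟩} = 0`. -/
def macaulay : ℕ → ℕ → ℕ
  | _, 0 => 0
  | 0, _ => 0
  | d + 1, a + 1 =>
    let k := Nat.findGreatest (fun k => Nat.choose k (d + 1) ≤ a + 1) (a + d + 2)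
    Nat.choose (k + 1) (d + 2) + macaulay d (a + 1 - Nat.choose k (d + 1))

/-!
Both `a` and `b` are peeled by one binomial step: `a^{⟨d⟩} = C(s+d, d+1) + A^{⟨d-1⟩}` and
`b^{⟨d⟩} = C(t+d, d+1) + B^{⟨d-1⟩}`, and `b₁ = C(t+d-1, d) + e` peels the same way since
`e < B`. Moving to `a₁ = C(s+d, d)` raises the top term by `C(s+d, d)`, which is exactly
`C(s-1+d, d-1)^{⟨d-1⟩}`, so the claim reduces to the hypothesis on the `(d-1)`-st level.
-/

lemma macaulay_zero (d : ℕ) : macaulay d 0 = 0 := by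
  cases d <;> rfl

lemma Nat.le_choose_succ_add (k d : ℕ) : k ≤ k.choose (d + 1) + d := by
  induction k with
  | zero => omega
  | succ k ih =>
    rw [Nat.choose_succ_succ']
    rcases lt_or_ge k d with hk | hk
    · omega
    · have := Nat.choose_pos hk
      omega

lemma macaulay_succ_choose_add {d k r : ℕ} (hr : r < k.choose d) :
    macaulay (d + 1) (k.choose (d + 1) + r) = (k + 1).choose (d + 2) + macaulay d r := by
  rcases lt_or_ge k (d + 1) with hk | hk
  · obtain rfl : k = d := by
      by_contra hne
      rw [Nat.choose_eq_zero_of_lt (by omega)] at hr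
      omega
    obtain rfl : r = 0 := by rw [Nat.choose_self] at hr; omega
    simp [macaulay_zero]
  obtain ⟨n, hn⟩ : ∃ n, k.choose (d + 1) + r = n + 1 :=
    ⟨k.choose (d + 1) + r - 1, by have := Nat.choose_pos hk; omega⟩
  have htop : Nat.findGreatest (fun j => j.choose (d + 1) ≤ n + 1) (n + d + 2) = k := by
    rw [Nat.findGreatest_eq_iff]
    refine ⟨by have := Nat.le_choose_succ_add k d; omega, fun _ => by omega,
      fun j hj _ => not_le.2 ?_⟩
    have := Nat.choose_le_choose (d + 1) (Nat.succ_le_of_lt hj)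
    rw [Nat.choose_succ_succ'] at this
    omega
  rw [hn, macaulay, htop, show n + 1 - k.choose (d + 1) = r by omega]

lemma macaulay_choose {d : ℕ} (hd : 1 ≤ d) (k : ℕ) :
    macaulay d (k.choose d) = (k + 1).choose (d + 1) := by
  obtain ⟨d, rfl⟩ : ∃ c, d = c + 1 := ⟨d - 1, by omega⟩
  rcases lt_or_ge k d with hk | hk
  · rw [Nat.choose_eq_zero_of_lt (by omega), Nat.choose_eq_zero_of_lt (by omega),
      macaulay_zero]
  · simpa [macaulay_zero] using macaulay_succ_choose_add (r := 0) (Nat.choose_pos hk)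

/-- At `r = C(k, d)` the sum is `C(k+1, d+1)`, whose top index is `k + 1` rather than `k`;
the identity survives by Pascal's rule once `d ≥ 1`. -/
lemma macaulay_succ_choose_add_of_le {d k r : ℕ} (hd : 1 ≤ d) (hr : r ≤ k.choose d) :
    macaulay (d + 1) (k.choose (d + 1) + r) = (k + 1).choose (d + 2) + macaulay d r := by
  rcases hr.lt_or_eq with hr | rfl
  · exact macaulay_succ_choose_add hr
  · rw [add_comm (k.choose (d + 1)), ← Nat.choose_succ_succ', macaulay_choose (by omega),
      macaulay_choose hd, Nat.choose_succ_succ' (k + 1)]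
    ring

theorem macaulay_case_two_general (d s t a b A B e : ℕ) (hd : 1 < d)
    (hs : 0 < s)
    (haeq : a = Nat.choose (s - 1 + d) d + A) (hA : A < Nat.choose (s - 1 + d) (d - 1))
    (hbeq : b = Nat.choose (t + d - 1) d + B)
    (hB : B ≤ Nat.choose (t + d - 1) (d - 1))
    (hABe : A + B = Nat.choose (s - 1 + d) (d - 1) + e)
    (hind : macaulay (d - 1) A + macaulay (d - 1) B ≤
      macaulay (d - 1) (Nat.choose (s - 1 + d) (d - 1)) + macaulay (d - 1) e) :
    Nat.choose (t + d - 1) d + e < b ∧ a < Nat.choose (s + d) d ∧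
    a + b = Nat.choose (s + d) d + (Nat.choose (t + d - 1) d + e) ∧
    macaulay d a + macaulay d b ≤
      macaulay d (Nat.choose (s + d) d) + macaulay d (Nat.choose (t + d - 1) d + e) := by
  obtain ⟨c, rfl⟩ : ∃ c, d = c + 1 := ⟨d - 1, by omega⟩
  have hc : 1 ≤ c := by omega
  set m := s - 1 + (c + 1)
  rw [show s + (c + 1) = m + 1 by omega, show t + (c + 1) - 1 = t + c by omega] at *
  rw [Nat.add_sub_cancel] at hA hB hABe hind
  subst haeq hbeq
  have he : e ≤ (t + c).choose c := by omega
  have hpascal : (m + 1).choose (c + 1) = m.choose c + m.choose (c + 1) :=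
    Nat.choose_succ_succ' m c
  have hpascal' : (m + 2).choose (c + 2) = (m + 1).choose (c + 1) + (m + 1).choose (c + 2) :=
    Nat.choose_succ_succ' (m + 1) (c + 1)
  refine ⟨by omega, by omega, by omega, ?_⟩
  rw [macaulay_succ_choose_add hA, macaulay_succ_choose_add_of_le hc hB,
    macaulay_succ_choose_add_of_le hc he, macaulay_choose (by omega), hpascal',
    ← macaulay_choose hc m]
  omega

/-- Case 2 of the key construction: let `d > 1`, `a ≥ b > 0`, written as
`a = C(s - 1 + d, d) + A` with `s > 0`, `0 ≤ A < C(s - 1 + d, d - 1)`, and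
`b = C(t - 1 + d, d) + B` with `t ≥ 0`, `0 < B ≤ C(t - 1 + d, d - 1)`.
Suppose `A + B = C(s - 1 + d, d - 1) + e` for some `e ≥ 0`, and suppose
`A^{⟨d-1⟩} + B^{⟨d-1⟩} ≤ (C(s - 1 + d, d - 1))^{⟨d-1⟩} + e^{⟨d-1⟩}`. Then for
`a₁ = C(s + d, d)` and `b₁ = C(t - 1 + d, d) + e` we have `0 ≤ b₁ < b ≤ a < a₁`,
`a + b = a₁ + b₁`, and `a^{⟨d⟩} + b^{⟨d⟩} ≤ a₁^{⟨d⟩} + b₁^{⟨d⟩}`.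
(Since `t` may be `0`, the quantity `t - 1 + d` is rendered as `t + d - 1` in `ℕ`.) -/
theorem macaulay_case_two (d s t a b A B e : ℕ) (hd : 1 < d) (hb : 0 < b) (hba : b ≤ a)
    (hs : 0 < s)
    (haeq : a = Nat.choose (s - 1 + d) d + A) (hA : A < Nat.choose (s - 1 + d) (d - 1))
    (hbeq : b = Nat.choose (t + d - 1) d + B)
    (hBpos : 0 < B) (hB : B ≤ Nat.choose (t + d - 1) (d - 1))
    (hABe : A + B = Nat.choose (s - 1 + d) (d - 1) + e)
    (hind : macaulay (d - 1) A + macaulay (d - 1) B ≤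
      macaulay (d - 1) (Nat.choose (s - 1 + d) (d - 1)) + macaulay (d - 1) e) :
    Nat.choose (t + d - 1) d + e < b ∧ a < Nat.choose (s + d) d ∧
    a + b = Nat.choose (s + d) d + (Nat.choose (t + d - 1) d + e) ∧
    macaulay d a + macaulay d b ≤
      macaulay d (Nat.choose (s + d) d) + macaulay d (Nat.choose (t + d - 1) d + e) :=
  macaulay_case_two_general d s t a b A B e hd hs haeq hA hbeq hB hABe hind
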